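/- arXiv:1702.01312 — 2 statements merged into one kernel-verified Lean document; each statement's English description precedes it below -/
import Mathlib

section
/- Let τ₁, τ₂, … be i.i.d. nonnegative random variables with E[τ] < ∞ and τ not a.s. equal to E[τ] − ε, where 0 < ε < E[τ]. Suppose δ > 0 satisfies E[exp(δ(E[τ] − ε − τ₁))] < 1. Define t_n = τ₁ + ⋯ + τ_n and γ = min{n ≥ 1 : t_k ≥ (E[τ]−ε)k for all k ≥ n}. Then P(γ > n) ≤ (E[exp(δ(E[τ]−ε−τ₁))])^n for all n ≥ 1; in particular γ is a.s. finite and has a light-tailed (exponentially decaying) distribution. -/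
open MeasureTheory Set Filter ProbabilityTheory

/-- The random time `γ` after which the renewal partial sums stay above the line
`(E τ - ε) k` has an exponentially decaying tail:
`P(γ > n) ≤ (E exp(δ(Eτ - ε - τ₁)))^n`; in particular `γ` is a.s. well defined (finite). -/
theorem gamma_light_tailed
    {Ω : Type*} [MeasurableSpace Ω] (μ : Measure Ω) [IsProbabilityMeasure μ]
    (τ : ℕ → Ω → ℝ) (hmeas : ∀ i, Measurable (τ i))
    (hnonneg : ∀ i ω, 0 ≤ τ i ω)
    (hindep : iIndepFun τ μ)
    (hident : ∀ i, μ.map (τ i) = μ.map (τ 0))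
    (hint : Integrable (τ 0) μ)
    (Eτ : ℝ) (hEτ : Eτ = ∫ ω, τ 0 ω ∂μ)
    (ε : ℝ) (hε : 0 < ε) (hεE : ε < Eτ)
    (δ : ℝ) (hδ : 0 < δ)
    (r : ℝ) (hr : r = ∫ ω, Real.exp (δ * (Eτ - ε - τ 0 ω)) ∂μ)
    (hr1 : r < 1)
    (t : ℕ → Ω → ℝ) (ht : ∀ n ω, t n ω = ∑ k ∈ Finset.range n, τ k ω)
    (γ : Ω → ℕ)
    (hγ : ∀ ω, γ ω = sInf {n : ℕ | 1 ≤ n ∧ ∀ k ≥ n, (Eτ - ε) * k ≤ t k ω}) :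
    (∀ n : ℕ, 1 ≤ n → (μ {ω | n < γ ω}).toReal ≤ r ^ n) ∧
      (∀ᵐ ω ∂μ, {n : ℕ | 1 ≤ n ∧ ∀ k ≥ n, (Eτ - ε) * k ≤ t k ω}.Nonempty) := by
  classical
  set c : ℝ := Eτ - ε with hc_def
  have hc : 0 < c := by simp only [hc_def]; linarith
  have hr0 : 0 ≤ r := by
    rw [hr]; exact integral_nonneg fun ω => (Real.exp_pos _).le
  -- the i.i.d. factors
  set Y : ℕ → Ω → ℝ := fun k ω => Real.exp (δ * (c - τ k ω)) with hY_def
  have hYmeas : ∀ k, Measurable (Y k) := fun k =>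
    Real.measurable_exp.comp ((measurable_const.sub (hmeas k)).const_mul δ)
  have hYpos : ∀ k ω, 0 < Y k ω := fun k ω => Real.exp_pos _
  have hYbd : ∀ k ω, Y k ω ≤ Real.exp (δ * c) := by
    intro k ω
    apply Real.exp_le_exp.mpr
    have := hnonneg k ω
    nlinarith
  have integ : ∀ (f : Ω → ℝ) (b : ℝ), Measurable f → (∀ ω, ‖f ω‖ ≤ b) → Integrable f μ :=
    fun f b hf hb =>
      Integrable.mono' (integrable_const b) hf.aestronglyMeasurable (ae_of_all _ hb)
  have hYint : ∀ k, Integrable (Y k) μ := fun k =>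
    integ _ (Real.exp (δ * c)) (hYmeas k) fun ω => by
      rw [Real.norm_eq_abs, abs_of_pos (hYpos k ω)]; exact hYbd k ω
  have hYr : ∀ k, ∫ ω, Y k ω ∂μ = r := by
    intro k
    have hg : Measurable fun x : ℝ => Real.exp (δ * (c - x)) :=
      Real.measurable_exp.comp ((measurable_const.sub measurable_id).const_mul δ)
    have h1 : ∫ ω, Y k ω ∂μ = ∫ x, Real.exp (δ * (c - x)) ∂(μ.map (τ k)) := by
      rw [integral_map (hmeas k).aemeasurable hg.aestronglyMeasurable]
    have h2 : r = ∫ x, Real.exp (δ * (c - x)) ∂(μ.map (τ 0)) := by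
      rw [integral_map (hmeas 0).aemeasurable hg.aestronglyMeasurable, hr]
    rw [h1, hident k, ← h2]
  -- the exponential supermartingale
  set M : ℕ → Ω → ℝ := fun m ω => ∏ k ∈ Finset.range m, Y k ω with hM_def
  have htn : ∀ k ω, 0 ≤ t k ω := by
    intro k ω; rw [ht]; exact Finset.sum_nonneg fun i _ => hnonneg i ω
  have hMexp : ∀ m ω, M m ω = Real.exp (δ * (c * m - t m ω)) := by
    intro m ω
    show (∏ k ∈ Finset.range m, Real.exp (δ * (c - τ k ω)))
      = Real.exp (δ * (c * m - t m ω))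
    rw [ht, ← Real.exp_sum]
    congr 1
    simp only [mul_sub]
    rw [Finset.sum_sub_distrib, Finset.sum_const, Finset.card_range, ← Finset.mul_sum,
      nsmul_eq_mul]
    ring
  have hMpos : ∀ m ω, 0 < M m ω := fun m ω => by
    rw [hMexp]; exact Real.exp_pos _
  have hMbd : ∀ m ω, M m ω ≤ Real.exp (δ * (c * m)) := by
    intro m ω
    rw [hMexp]
    apply Real.exp_le_exp.mpr
    have := htn m ω
    nlinarith
  have hMmeas : ∀ m, Measurable (M m) := by
    intro m
    have : Measurable (t m) := by
      have : t m = fun ω => ∑ k ∈ Finset.range m, τ k ω := funext (ht m)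
      rw [this]
      exact Finset.measurable_sum _ fun i _ => hmeas i
    have h : Measurable fun ω => Real.exp (δ * (c * m - t m ω)) :=
      Real.measurable_exp.comp ((measurable_const.sub this).const_mul δ)
    have heq : M m = fun ω => Real.exp (δ * (c * m - t m ω)) := funext (hMexp m)
    rw [heq]
    exact h
  have hMint : ∀ m, Integrable (M m) μ := fun m =>
    integ _ (Real.exp (δ * (c * m))) (hMmeas m) fun ω => by
      rw [Real.norm_eq_abs, abs_of_pos (hMpos m ω)]; exact hMbd m ω
  -- filtration
  set F : ℕ → MeasurableSpace Ω :=
    fun m => ⨆ k ∈ {i : ℕ | i < m}, MeasurableSpace.comap (τ k) inferInstance with hF_def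
  have hFle : ∀ m, F m ≤ ‹MeasurableSpace Ω› := fun m =>
    iSup₂_le fun k _ => (hmeas k).comap_le
  have hτF : ∀ m k, k < m → Measurable[F m] (τ k) := by
    intro m k hk
    exact (Measurable.of_comap_le le_rfl).mono
      (le_biSup (fun k => MeasurableSpace.comap (τ k) inferInstance) hk) le_rfl
  have htF : ∀ m k, k ≤ m → Measurable[F m] (t k) := by
    intro m k hk
    have : t k = fun ω => ∑ j ∈ Finset.range k, τ j ω := funext (ht k)
    rw [this]
    exact Finset.measurable_sum _ fun j hj =>
      hτF m j (lt_of_lt_of_le (Finset.mem_range.mp hj) hk)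
  have hMF : ∀ m, Measurable[F m] (M m) := by
    intro m
    apply Finset.measurable_prod
    intro k hk
    exact Real.measurable_exp.comp
      ((measurable_const.sub (hτF m k (Finset.mem_range.mp hk))).const_mul δ)
  -- the key independence computation
  have key : ∀ (m : ℕ) (f : Ω → ℝ), Measurable[F m] f → Integrable f μ →
      ∫ ω, f ω * Y m ω ∂μ = (∫ ω, f ω ∂μ) * r := by
    intro m f hf hfint
    have hIndep : Indep (F m) (MeasurableSpace.comap (τ m) inferInstance) μ := by
      have hdisj : Disjoint {i : ℕ | i < m} ({m} : Set ℕ) := by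
        simp [Set.disjoint_singleton_right]
      have h := indep_iSup_of_disjoint (fun i => (hmeas i).comap_le) hindep.iIndep hdisj
      simpa [hF_def] using h
    have hτmY : Measurable[MeasurableSpace.comap (τ m) inferInstance] (Y m) := by
      exact Real.measurable_exp.comp
        ((measurable_const.sub (Measurable.of_comap_le le_rfl)).const_mul δ)
    have hfY : IndepFun f (Y m) μ := by
      rw [IndepFun_iff_Indep]
      exact indep_of_indep_of_le_left
        (indep_of_indep_of_le_right hIndep hτmY.comap_le) hf.comap_le
    have := IndepFun.integral_fun_mul_eq_mul_integral hfY hfint.aestronglyMeasurable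
      (hYint m).aestronglyMeasurable
    simpa [hYr m] using this
  -- expectation of M m is r ^ m
  have hMr : ∀ m, ∫ ω, M m ω ∂μ = r ^ m := by
    intro m
    induction m with
    | zero => simp [hM_def]
    | succ m ihm =>
      have hsucc : (fun ω => M (m + 1) ω) = fun ω => M m ω * Y m ω := by
        funext ω; rw [hM_def]; exact Finset.prod_range_succ _ m
      calc ∫ ω, M (m + 1) ω ∂μ = ∫ ω, M m ω * Y m ω ∂μ := by rw [hsucc]
        _ = (∫ ω, M m ω ∂μ) * r := key m (M m) (hMF m) (hMint m)
        _ = r ^ (m + 1) := by rw [ihm]; ring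
  -- the master estimate
  have Emain : ∀ n : ℕ, 1 ≤ n →
      μ {ω | ∃ k, n ≤ k ∧ t k ω < c * k} ≤ ENNReal.ofReal (r ^ n) := by
    intro n hn
    set A : ℕ → Set Ω := fun k =>
      {ω | t k ω < c * k} ∩ ⋂ j ∈ Finset.Ico n k, {ω | c * j ≤ t j ω} with hA_def
    set C : ℕ → Set Ω := fun m => ⋂ j ∈ Finset.Icc n m, {ω | c * j ≤ t j ω} with hC_def
    have ht_meas : ∀ k, Measurable (t k) := by
      intro k
      have : t k = fun ω => ∑ j ∈ Finset.range k, τ j ω := funext (ht k)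
      rw [this]
      exact Finset.measurable_sum _ fun j _ => hmeas j
    have hA_meas : ∀ k, MeasurableSet (A k) := by
      intro k
      exact (measurableSet_lt (ht_meas k) measurable_const).inter
        (MeasurableSet.biInter (Finset.Ico n k).countable_toSet fun j _ =>
          measurableSet_le measurable_const (ht_meas j))
    have hCF : ∀ m, MeasurableSet[F m] (C m) := by
      intro m
      exact MeasurableSet.biInter (Finset.Icc n m).countable_toSet fun j hj =>
        measurableSet_le measurable_const (htF m j (Finset.mem_Icc.mp hj).2)
    have hC_meas : ∀ m, MeasurableSet (C m) := fun m => hFle m _ (hCF m)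
    -- splitting C m into A (m+1) and C (m+1)
    have hCsplit : ∀ m, n ≤ m → C m = A (m + 1) ∪ C (m + 1) := by
      intro m hm
      ext ω
      simp only [hC_def, hA_def, Set.mem_iInter, Set.mem_union, Set.mem_inter_iff,
        Set.mem_setOf_eq, Finset.mem_Icc, Finset.mem_Ico]
      constructor
      · intro h
        by_cases hlt : t (m + 1) ω < c * ((m + 1 : ℕ) : ℝ)
        · exact Or.inl ⟨hlt, fun j hj => h j ⟨hj.1, by omega⟩⟩
        · refine Or.inr fun j hj => ?_
          rcases Nat.lt_or_ge j (m + 1) with h' | h'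
          · exact h j ⟨hj.1, by omega⟩
          · have : j = m + 1 := by omega
            subst this
            push_neg at hlt
            exact hlt
      · rintro (⟨h1, h2⟩ | h) j hj
        · exact h2 j ⟨hj.1, by omega⟩
        · exact h j ⟨hj.1, by omega⟩
      -- done
    have hACdisj : ∀ m, n ≤ m → Disjoint (A (m + 1)) (C (m + 1)) := by
      intro m hm
      rw [Set.disjoint_left]
      intro ω hA hC
      have h1 : t (m + 1) ω < c * ((m + 1 : ℕ) : ℝ) := hA.1
      have h2 : c * ((m + 1 : ℕ) : ℝ) ≤ t (m + 1) ω := by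
        simp only [hC_def, Set.mem_iInter, Set.mem_setOf_eq] at hC
        exact hC (m + 1) (Finset.mem_Icc.mpr ⟨by omega, le_rfl⟩)
      linarith
    -- one supermartingale step
    have hstep : ∀ m, ∫ ω in C m, M (m + 1) ω ∂μ = r * ∫ ω in C m, M m ω ∂μ := by
      intro m
      have hind_meas : Measurable[F m] ((C m).indicator (M m)) :=
        (hMF m).indicator (hCF m)
      have hind_int : Integrable ((C m).indicator (M m)) μ := by
        apply integ _ (Real.exp (δ * (c * m))) (((hMmeas m)).indicator (hC_meas m))
        intro ω
        by_cases hω : ω ∈ C m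
        · rw [Set.indicator_of_mem hω, Real.norm_eq_abs, abs_of_pos (hMpos m ω)]
          exact hMbd m ω
        · rw [Set.indicator_of_notMem hω]
          simp [Real.exp_nonneg]
      have h1 : ∫ ω in C m, M (m + 1) ω ∂μ
          = ∫ ω, (C m).indicator (M m) ω * Y m ω ∂μ := by
        rw [← integral_indicator (hC_meas m)]
        congr 1
        funext ω
        by_cases hω : ω ∈ C m
        · rw [Set.indicator_of_mem hω, Set.indicator_of_mem hω, hM_def]
          exact Finset.prod_range_succ _ m
        · rw [Set.indicator_of_notMem hω, Set.indicator_of_notMem hω, zero_mul]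
      rw [h1, key m _ hind_meas hind_int, integral_indicator (hC_meas m)]
      ring
    -- the decreasing quantity
    set G : ℕ → ℝ := fun m =>
      (∑ k ∈ Finset.Icc n m, ∫ ω in A k, M k ω ∂μ) + ∫ ω in C m, M m ω ∂μ with hG_def
    have hCnonneg : ∀ m, 0 ≤ ∫ ω in C m, M m ω ∂μ := fun m =>
      setIntegral_nonneg (hC_meas m) fun ω _ => (hMpos m ω).le
    have hG : ∀ m, n ≤ m → G m ≤ r ^ n := by
      intro m hm
      induction m, hm using Nat.le_induction with
      | base =>
        have hAn : A n = {ω | t n ω < c * n} := by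
          simp [hA_def]
        have hCn : C n = {ω | c * n ≤ t n ω} := by
          ext ω
          simp only [hC_def, Set.mem_iInter, Finset.mem_Icc, Set.mem_setOf_eq]
          constructor
          · intro h; exact h n ⟨le_rfl, le_rfl⟩
          · intro h j hj
            have : j = n := le_antisymm hj.2 hj.1
            subst this
            exact h
        have hunion : A n ∪ C n = Set.univ := by
          rw [hAn, hCn]
          ext ω
          simp only [Set.mem_union, Set.mem_setOf_eq, Set.mem_univ, iff_true]
          exact lt_or_ge _ _
        have hdisj : Disjoint (A n) (C n) := by
          rw [hAn, hCn, Set.disjoint_left]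
          intro ω h1 h2
          simp only [Set.mem_setOf_eq] at h1 h2
          linarith
        have : G n = ∫ ω, M n ω ∂μ := by
          simp only [hG_def]
          simp only [Finset.Icc_self, Finset.sum_singleton]
          rw [← setIntegral_union hdisj (hC_meas n) ((hMint n).integrableOn)
            ((hMint n).integrableOn), hunion, setIntegral_univ]
        rw [this, hMr n]
      | succ m hm ihm =>
        have hsum : G (m + 1) = (∑ k ∈ Finset.Icc n m, ∫ ω in A k, M k ω ∂μ)
            + (∫ ω in A (m + 1), M (m + 1) ω ∂μ + ∫ ω in C (m + 1), M (m + 1) ω ∂μ) := by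
          simp only [hG_def]
          rw [Finset.sum_Icc_succ_top (by omega : n ≤ m + 1)]
          ring
        have hAC : ∫ ω in A (m + 1), M (m + 1) ω ∂μ + ∫ ω in C (m + 1), M (m + 1) ω ∂μ
            = ∫ ω in C m, M (m + 1) ω ∂μ := by
          rw [← setIntegral_union (hACdisj m hm) (hC_meas (m + 1))
            ((hMint (m + 1)).integrableOn) ((hMint (m + 1)).integrableOn),
            ← hCsplit m hm]
        have hle : ∫ ω in C m, M (m + 1) ω ∂μ ≤ ∫ ω in C m, M m ω ∂μ := by
          rw [hstep m]
          nlinarith [hCnonneg m]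
        calc G (m + 1) ≤ (∑ k ∈ Finset.Icc n m, ∫ ω in A k, M k ω ∂μ)
              + ∫ ω in C m, M m ω ∂μ := by rw [hsum, hAC]; linarith
          _ = G m := rfl
          _ ≤ r ^ n := ihm
    -- measure of each finite-horizon event
    have hEbound : ∀ m, n ≤ m →
        (μ (⋃ k ∈ Finset.Icc n m, A k)).toReal ≤ r ^ n := by
      intro m hm
      have hdisj : (↑(Finset.Icc n m) : Set ℕ).PairwiseDisjoint A := by
        intro k hk l hl hkl
        rw [Function.onFun, Set.disjoint_left]
        intro ω hkA hlA
        rcases Nat.lt_or_ge k l with h | h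
        · have h1 : t k ω < c * k := hkA.1
          have h2 : c * k ≤ t k ω := by
            have h3 := hlA.2
            simp only [Set.mem_iInter, Set.mem_setOf_eq] at h3
            exact h3 k (Finset.mem_Ico.mpr ⟨(Finset.mem_Icc.mp hk).1, h⟩)
          linarith
        · have hlk : l < k := by omega
          have h1 : t l ω < c * l := hlA.1
          have h2 : c * l ≤ t l ω := by
            have h3 := hkA.2
            simp only [Set.mem_iInter, Set.mem_setOf_eq] at h3
            exact h3 l (Finset.mem_Ico.mpr ⟨(Finset.mem_Icc.mp hl).1, hlk⟩)
          linarith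
      have hmeasU : μ (⋃ k ∈ Finset.Icc n m, A k) = ∑ k ∈ Finset.Icc n m, μ (A k) :=
        measure_biUnion_finset hdisj fun k _ => hA_meas k
      have htoReal : (μ (⋃ k ∈ Finset.Icc n m, A k)).toReal
          = ∑ k ∈ Finset.Icc n m, (μ (A k)).toReal := by
        rw [hmeasU, ENNReal.toReal_sum fun k _ => measure_ne_top μ _]
      have hAk : ∀ k, (μ (A k)).toReal ≤ ∫ ω in A k, M k ω ∂μ := by
        intro k
        have h1 : (μ (A k)).toReal = ∫ _ω in A k, (1 : ℝ) ∂μ := by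
          rw [setIntegral_const]; simp; rfl
        rw [h1]
        apply setIntegral_mono_on ((integrable_const (1 : ℝ)).integrableOn)
          ((hMint k).integrableOn) (hA_meas k)
        intro ω hω
        rw [hMexp]
        apply Real.one_le_exp
        have h2 : t k ω < c * k := hω.1
        nlinarith
      calc (μ (⋃ k ∈ Finset.Icc n m, A k)).toReal
          = ∑ k ∈ Finset.Icc n m, (μ (A k)).toReal := htoReal
        _ ≤ ∑ k ∈ Finset.Icc n m, ∫ ω in A k, M k ω ∂μ :=
            Finset.sum_le_sum fun k _ => hAk k
        _ ≤ G m := by simp only [hG_def]; linarith [hCnonneg m]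
        _ ≤ r ^ n := hG m hm
    -- pass to the limit
    have hsub : {ω | ∃ k, n ≤ k ∧ t k ω < c * k}
        ⊆ ⋃ m, ⋃ k ∈ Finset.Icc n (n + m), A k := by
      intro ω hω
      obtain ⟨k, hk1, hk2⟩ := hω
      -- take the least such k
      have hex : ∃ j, n ≤ j ∧ t j ω < c * j := ⟨k, hk1, hk2⟩
      set j₀ := Nat.find hex with hj₀
      obtain ⟨hj₀1, hj₀2⟩ := Nat.find_spec hex
      refine Set.mem_iUnion.mpr ⟨j₀ - n, Set.mem_iUnion₂.mpr ⟨j₀, ?_, ?_, ?_⟩⟩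
      · refine Finset.mem_Icc.mpr ⟨hj₀1, by omega⟩
      · exact hj₀2
      · simp only [Set.mem_iInter]
        intro j hj
        rw [Finset.mem_Ico] at hj
        rw [Set.mem_setOf_eq]
        by_contra hcon
        push_neg at hcon
        exact Nat.find_min hex hj.2 ⟨hj.1, hcon⟩
    have hdir : Directed (· ⊆ ·) fun m => ⋃ k ∈ Finset.Icc n (n + m), A k := by
      intro m₁ m₂
      refine ⟨max m₁ m₂, fun x hx => ?_, fun x hx => ?_⟩ <;>
      · simp only [Set.mem_iUnion, Finset.mem_Icc] at hx ⊢
        obtain ⟨k, hk, hmem⟩ := hx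
        exact ⟨k, ⟨hk.1, by omega⟩, hmem⟩
    have hUb : ∀ m, μ (⋃ k ∈ Finset.Icc n (n + m), A k) ≤ ENNReal.ofReal (r ^ n) := by
      intro m
      have h := hEbound (n + m) (by omega)
      calc μ (⋃ k ∈ Finset.Icc n (n + m), A k)
          = ENNReal.ofReal ((μ (⋃ k ∈ Finset.Icc n (n + m), A k)).toReal) :=
            (ENNReal.ofReal_toReal (measure_ne_top μ _)).symm
        _ ≤ ENNReal.ofReal (r ^ n) := ENNReal.ofReal_le_ofReal h
    calc μ {ω | ∃ k, n ≤ k ∧ t k ω < c * k}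
        ≤ μ (⋃ m, ⋃ k ∈ Finset.Icc n (n + m), A k) := measure_mono hsub
      _ = ⨆ m, μ (⋃ k ∈ Finset.Icc n (n + m), A k) := hdir.measure_iUnion
      _ ≤ ENNReal.ofReal (r ^ n) := iSup_le hUb
  -- Part 1
  constructor
  · intro n hn
    have hsub : {ω | n < γ ω} ⊆ {ω | ∃ k, n ≤ k ∧ t k ω < c * k} := by
      intro ω hω
      by_contra hcon
      simp only [Set.mem_setOf_eq] at hcon
      push_neg at hcon
      have hmem : n ∈ {m : ℕ | 1 ≤ m ∧ ∀ k ≥ m, (Eτ - ε) * k ≤ t k ω} :=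
        ⟨hn, fun k hk => hcon k hk⟩
      have : γ ω ≤ n := by rw [hγ]; exact Nat.sInf_le hmem
      exact absurd hω (by simp only [Set.mem_setOf_eq]; omega)
    have h := le_trans (measure_mono hsub) (Emain n hn)
    exact ENNReal.toReal_le_of_le_ofReal (pow_nonneg hr0 n) h
  -- Part 2
  · rw [ae_iff]
    set bad := {ω | ¬ {n : ℕ | 1 ≤ n ∧ ∀ k ≥ n, (Eτ - ε) * k ≤ t k ω}.Nonempty} with hbad
    have hsub : ∀ n : ℕ, 1 ≤ n → bad ⊆ {ω | ∃ k, n ≤ k ∧ t k ω < c * k} := by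
      intro n hn ω hω
      by_contra hcon
      simp only [Set.mem_setOf_eq] at hcon
      push_neg at hcon
      exact hω ⟨n, hn, fun k hk => hcon k hk⟩
    have hble : ∀ n : ℕ, 1 ≤ n → μ bad ≤ ENNReal.ofReal (r ^ n) := fun n hn =>
      le_trans (measure_mono (hsub n hn)) (Emain n hn)
    have htend : Tendsto (fun n : ℕ => ENNReal.ofReal (r ^ n)) atTop (nhds 0) := by
      have h := tendsto_pow_atTop_nhds_zero_of_lt_one hr0 hr1
      have := ENNReal.tendsto_ofReal h
      simpa using this
    have : μ bad ≤ 0 :=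
      ge_of_tendsto htend (eventually_atTop.mpr ⟨1, fun n hn => hble n hn⟩)
    exact le_antisymm this zero_le
end

section
/- Suppose F₁ is a strong subexponential distribution on [0,∞) (meaning \overline{F₁} > 0 everywhere and ∫_0^x \overline{F₁}(x−y)\overline{F₁}(y) dy ∼ 2 m_{F₁} \overline{F₁}(x) as x → ∞, where m_{F₁} = ∫_0^∞ \overline{F₁}(y) dy < ∞), and F₂ is a distribution on [0,∞) with \overline{F₂}(x) ∼ \overline{F₁}(x) as x → ∞ and finite mean. If additionally F₁ and F₂ are long-tailed, then F₂ is strong subexponential. -/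
open MeasureTheory Set Filter

/-- `F` is long-tailed: positive tail and `(1-F)(x+c) ∼ (1-F)(x)` for each fixed `c > 0`. -/
def LongTailed (F : ℝ → ℝ) : Prop :=
  (∀ x : ℝ, 0 < 1 - F x) ∧
    ∀ c : ℝ, 0 < c → Tendsto (fun x => (1 - F (x + c)) / (1 - F x)) atTop (nhds 1)

/-- `F` is strong subexponential (`F ∈ 𝒮*`): positive tail, finite mean
`m_F = ∫_0^∞ (1-F)`, and `∫_0^x (1-F)(x-y)(1-F)(y) dy ∼ 2 m_F (1-F)(x)`. -/
def StrongSubexponential (F : ℝ → ℝ) : Prop :=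
  (∀ x : ℝ, 0 < 1 - F x) ∧
    IntegrableOn (fun y => 1 - F y) (Ioi (0 : ℝ)) ∧
    Tendsto
      (fun x : ℝ =>
        (∫ y in Ioc (0 : ℝ) x, (1 - F (x - y)) * (1 - F y))
          / (2 * (∫ y in Ioi (0 : ℝ), (1 - F y)) * (1 - F x)))
      atTop (nhds 1)

section AuxHelpers
open intervalIntegral

lemma aux_intInt1 {h : ℝ → ℝ} (hm : Measurable h) (h0 : ∀ y, 0 ≤ h y) (h1 : ∀ y, h y ≤ 1)
    (a b : ℝ) : IntervalIntegrable h volume a b := by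
  refine IntervalIntegrable.mono_fun' (g := fun _ => (1:ℝ)) intervalIntegrable_const
    hm.aestronglyMeasurable ?_
  filter_upwards with y
  rw [Real.norm_eq_abs, abs_of_nonneg (h0 y)]
  exact h1 y

lemma aux_intInt {h : ℝ → ℝ} (hm : Measurable h) (h0 : ∀ y, 0 ≤ h y) (h1 : ∀ y, h y ≤ 1)
    (x a b : ℝ) : IntervalIntegrable (fun y => h (x - y) * h y) volume a b := by
  refine IntervalIntegrable.mono_fun' (g := fun _ => (1:ℝ)) intervalIntegrable_const
    (((hm.comp (measurable_const.sub measurable_id)).mul hm).aestronglyMeasurable) ?_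
  filter_upwards with y
  rw [Real.norm_eq_abs, abs_of_nonneg (mul_nonneg (h0 _) (h0 _))]
  exact mul_le_one₀ (h1 _) (h0 _) (h1 _)

lemma aux_decomp {h : ℝ → ℝ} (hm : Measurable h) (h0 : ∀ y, 0 ≤ h y) (h1 : ∀ y, h y ≤ 1)
    {T x : ℝ} (hT : 0 ≤ T) (hx : 2 * T ≤ x) :
    ∫ y in Ioc (0:ℝ) x, h (x - y) * h y
      = 2 * (∫ y in (0:ℝ)..T, h (x - y) * h y) + ∫ y in T..(x - T), h (x - y) * h y := by
  have h0x : (0:ℝ) ≤ x := by linarith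
  rw [← intervalIntegral.integral_of_le h0x]
  have i1 := aux_intInt hm h0 h1 x 0 T
  have i2 := aux_intInt hm h0 h1 x T (x - T)
  have i3 := aux_intInt hm h0 h1 x (x - T) x
  rw [← intervalIntegral.integral_add_adjacent_intervals i1 (i2.trans i3),
      ← intervalIntegral.integral_add_adjacent_intervals i2 i3]
  have hlast : (∫ y in (x - T)..x, h (x - y) * h y) = ∫ y in (0:ℝ)..T, h (x - y) * h y := by
    have hc := intervalIntegral.integral_comp_sub_left (a := x - T) (b := x)
      (fun u => h u * h (x - u)) x
    simp only [sub_sub_cancel, sub_self] at hc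
    rw [hc]
    simp_rw [mul_comm]
  rw [hlast]; ring

lemma aux_shift {h : ℝ → ℝ} {T : ℝ}
    (hlt : Tendsto (fun x => h (x + T) / h x) atTop (nhds 1)) :
    Tendsto (fun x => h (x - T) / h x) atTop (nhds 1) := by
  have h1 : Tendsto (fun x => h x / h (x + T)) atTop (nhds 1) := by
    have := hlt.inv₀ one_ne_zero
    simpa [inv_div] using this
  have h2 : Tendsto (fun x : ℝ => x - T) atTop atTop :=
    tendsto_atTop_add_const_right atTop (-T) tendsto_id
  have := h1.comp h2
  simp only [Function.comp_def] at this
  simpa [sub_add_cancel] using this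

lemma aux_edge {h : ℝ → ℝ} (hm : Measurable h) (hanti : Antitone h) (hpos : ∀ y, 0 < h y)
    (h1 : ∀ y, h y ≤ 1) {T : ℝ} (hT : 0 ≤ T)
    (hshift : Tendsto (fun x => h (x - T) / h x) atTop (nhds 1)) :
    Tendsto (fun x => (∫ y in (0:ℝ)..T, h (x - y) * h y) / h x) atTop
      (nhds (∫ y in (0:ℝ)..T, h y)) := by
  set a := ∫ y in (0:ℝ)..T, h y with ha
  have h0 : ∀ y, 0 ≤ h y := fun y => (hpos y).le
  have ha0 : 0 ≤ a := intervalIntegral.integral_nonneg hT (fun y _ => h0 y)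
  have hih := aux_intInt1 hm h0 h1 0 T
  refine tendsto_of_tendsto_of_tendsto_of_le_of_le' (g := fun _ => a)
    (h := fun x => h (x - T) / h x * a) tendsto_const_nhds
    (by simpa using hshift.mul_const a) ?_ ?_
  · filter_upwards with x
    rw [le_div_iff₀ (hpos x), mul_comm]
    calc h x * a = ∫ y in (0:ℝ)..T, h x * h y := by
          rw [← intervalIntegral.integral_const_mul]
      _ ≤ ∫ y in (0:ℝ)..T, h (x - y) * h y := by
          refine intervalIntegral.integral_mono_on hT (hih.const_mul _)
            (aux_intInt hm h0 h1 x 0 T) (fun y hy => ?_)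
          exact mul_le_mul_of_nonneg_right (hanti (by linarith [hy.1])) (h0 y)
  · filter_upwards with x
    rw [div_mul_eq_mul_div, div_le_div_iff_of_pos_right (hpos x)]
    calc (∫ y in (0:ℝ)..T, h (x - y) * h y) ≤ ∫ y in (0:ℝ)..T, h (x - T) * h y := by
          refine intervalIntegral.integral_mono_on hT
            (aux_intInt hm h0 h1 x 0 T) (hih.const_mul _) (fun y hy => ?_)
          exact mul_le_mul_of_nonneg_right (hanti (by linarith [hy.2])) (h0 y)
      _ = h (x - T) * a := by rw [intervalIntegral.integral_const_mul]

lemma aux_mpos {h : ℝ → ℝ} (hanti : Antitone h) (hpos : ∀ y, 0 < h y)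
    (hint : IntegrableOn h (Ioi (0:ℝ))) : 0 < ∫ y in Ioi (0:ℝ), h y := by
  have hsub : ∫ y in Ioc (0:ℝ) 1, h y ≤ ∫ y in Ioi (0:ℝ), h y :=
    setIntegral_mono_set hint (Filter.Eventually.of_forall fun y => (hpos y).le)
      (HasSubset.Subset.eventuallyLE Ioc_subset_Ioi_self)
  refine lt_of_lt_of_le ?_ hsub
  have hc : h 1 * (volume (Ioc (0:ℝ) 1)).toReal ≤ ∫ y in Ioc (0:ℝ) 1, h y :=
    setIntegral_ge_of_const_le_real measurableSet_Ioc (by simp) (fun y hy => hanti hy.2)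
      (hint.mono_set Ioc_subset_Ioi_self)
  have hv : (volume (Ioc (0:ℝ) 1)).toReal = 1 := by simp
  rw [hv, mul_one] at hc
  exact lt_of_lt_of_le (hpos 1) hc

set_option maxHeartbeats 2000000 in
lemma aux_main (f g : ℝ → ℝ) (fm : Measurable f) (gm : Measurable g)
    (fanti : Antitone f) (ganti : Antitone g)
    (fpos : ∀ y, 0 < f y) (gpos : ∀ y, 0 < g y)
    (f1 : ∀ y, f y ≤ 1) (g1 : ∀ y, g y ≤ 1)
    (fint : IntegrableOn f (Ioi (0:ℝ))) (gint : IntegrableOn g (Ioi (0:ℝ)))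
    (hconv : Tendsto (fun x => (∫ y in Ioc (0:ℝ) x, f (x - y) * f y)
        / (2 * (∫ y in Ioi (0:ℝ), f y) * f x)) atTop (nhds 1))
    (hequiv : Tendsto (fun x => g x / f x) atTop (nhds 1))
    (hLf : ∀ c : ℝ, 0 < c → Tendsto (fun x => f (x + c) / f x) atTop (nhds 1))
    (hLg : ∀ c : ℝ, 0 < c → Tendsto (fun x => g (x + c) / g x) atTop (nhds 1)) :
    Tendsto (fun x => (∫ y in Ioc (0:ℝ) x, g (x - y) * g y)
        / (2 * (∫ y in Ioi (0:ℝ), g y) * g x)) atTop (nhds 1) := by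
  have f0 : ∀ y, 0 ≤ f y := fun y => (fpos y).le
  have g0 : ∀ y, 0 ≤ g y := fun y => (gpos y).le
  set m₁ : ℝ := ∫ y in Ioi (0:ℝ), f y with hm₁
  set m₂ : ℝ := ∫ y in Ioi (0:ℝ), g y with hm₂
  have m₁pos : 0 < m₁ := aux_mpos fanti fpos fint
  have m₂pos : 0 < m₂ := aux_mpos ganti gpos gint
  -- reduce to I₂/g → 2 m₂
  suffices main : Tendsto (fun x => (∫ y in Ioc (0:ℝ) x, g (x - y) * g y) / g x)
      atTop (nhds (2 * m₂)) by
    have h := main.div_const (2 * m₂)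
    rw [div_self (by positivity : (2:ℝ) * m₂ ≠ 0)] at h
    refine h.congr fun x => ?_
    rw [div_div, mul_comm]
  -- I₁ / f → 2 m₁
  have hIf : Tendsto (fun x => (∫ y in Ioc (0:ℝ) x, f (x - y) * f y) / f x)
      atTop (nhds (2 * m₁)) := by
    have h := hconv.mul_const (2 * m₁)
    rw [one_mul] at h
    refine h.congr fun x => ?_
    have hfx := (fpos x).ne'
    field_simp
  rw [Metric.tendsto_nhds]
  intro ε hε
  -- choose T
  have htailg : Tendsto (fun T => ∫ y in (0:ℝ)..T, g y) atTop (nhds m₂) :=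
    intervalIntegral_tendsto_integral_Ioi 0 gint tendsto_id
  have htailf : Tendsto (fun T => ∫ y in (0:ℝ)..T, f y) atTop (nhds m₁) :=
    intervalIntegral_tendsto_integral_Ioi 0 fint tendsto_id
  have hcomp : ∀ᶠ y in atTop, g y ≤ 2 * f y ∧ f y ≤ 2 * g y := by
    filter_upwards [Metric.tendsto_nhds.mp hequiv (1/2) (by norm_num)] with y hy
    rw [Real.dist_eq] at hy
    obtain ⟨hy1, hy2⟩ := abs_lt.mp hy
    have hfy := fpos y
    constructor
    · have h3 : g y / f y < 3/2 := by linarith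
      have := (div_lt_iff₀ hfy).mp h3
      linarith
    · have h3 : (1:ℝ)/2 < g y / f y := by linarith
      have := (lt_div_iff₀ hfy).mp h3
      linarith
  obtain ⟨N₀, hN₀⟩ := eventually_atTop.mp hcomp
  obtain ⟨T, ⟨⟨hTg, hTf⟩, hTN⟩⟩ :=
    (((Metric.tendsto_nhds.mp htailg (ε/16) (by positivity)).and
      (Metric.tendsto_nhds.mp htailf (ε/256) (by positivity))).and
      (eventually_ge_atTop (max N₀ 1))).exists
  have hT1 : (1:ℝ) ≤ T := le_trans (le_max_right _ _) hTN
  have hT0 : (0:ℝ) ≤ T := by linarith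
  have hTpos : (0:ℝ) < T := by linarith
  have hTN' : ∀ y, T ≤ y → g y ≤ 2 * f y ∧ f y ≤ 2 * g y :=
    fun y hy => hN₀ y (le_trans (le_max_left _ _) (le_trans hTN hy))
  set a : ℝ := ∫ y in (0:ℝ)..T, g y with ha
  set b : ℝ := ∫ y in (0:ℝ)..T, f y with hb
  rw [Real.dist_eq] at hTg hTf
  have hA : m₂ - a ≤ ε/16 := by have := (abs_lt.mp hTg).1; linarith
  have hB : m₁ - b ≤ ε/256 := by have := (abs_lt.mp hTf).1; linarith
  have ha_le : a ≤ m₂ := by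
    rw [ha, intervalIntegral.integral_of_le hT0]
    exact setIntegral_mono_set gint (Filter.Eventually.of_forall g0)
      (HasSubset.Subset.eventuallyLE Ioc_subset_Ioi_self)
  -- eventual facts in x
  have hedge_g := aux_edge gm ganti gpos g1 hT0 (aux_shift (hLg T hTpos))
  have hedge_f := aux_edge fm fanti fpos f1 hT0 (aux_shift (hLf T hTpos))
  have hmidf : Tendsto (fun x => (∫ y in Ioc (0:ℝ) x, f (x - y) * f y) / f x
      - 2 * ((∫ y in (0:ℝ)..T, f (x - y) * f y) / f x)) atTop (nhds (2 * m₁ - 2 * b)) :=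
    hIf.sub (hedge_f.const_mul 2)
  filter_upwards [eventually_ge_atTop (2 * T),
    Metric.tendsto_nhds.mp hedge_g (ε/8) (by positivity),
    Metric.tendsto_nhds.mp hmidf (ε/64) (by positivity)] with x hx1 hx2 hx3
  have hgx := gpos x
  have hfx := fpos x
  have hTx : T ≤ x := by linarith
  have hdg := aux_decomp gm g0 g1 hT0 hx1
  have hdf := aux_decomp fm f0 f1 hT0 hx1
  set A₂ : ℝ := ∫ y in (0:ℝ)..T, g (x - y) * g y with hA₂
  set A₁ : ℝ := ∫ y in (0:ℝ)..T, f (x - y) * f y with hA₁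
  set M₂ : ℝ := ∫ y in T..(x - T), g (x - y) * g y with hM₂
  set M₁ : ℝ := ∫ y in T..(x - T), f (x - y) * f y with hM₁
  rw [Real.dist_eq] at hx2 hx3
  -- middle-term bound for f
  have hM1f : M₁ / f x ≤ ε/32 := by
    have heq : (∫ y in Ioc (0:ℝ) x, f (x - y) * f y) / f x - 2 * (A₁ / f x) = M₁ / f x := by
      rw [hdf]; field_simp; ring
    have := (abs_lt.mp hx3).2
    rw [heq] at this
    linarith
  -- compare M₂ with M₁
  have hM1nn : 0 ≤ M₁ :=
    intervalIntegral.integral_nonneg (by linarith) (fun y _ => mul_nonneg (f0 _) (f0 _))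
  have hM2nn : 0 ≤ M₂ :=
    intervalIntegral.integral_nonneg (by linarith) (fun y _ => mul_nonneg (g0 _) (g0 _))
  have hM21 : M₂ ≤ 4 * M₁ := by
    have hpt : ∀ y ∈ Icc T (x - T), g (x - y) * g y ≤ 4 * (f (x - y) * f y) := by
      intro y hy
      have h1 := (hTN' y hy.1).1
      have h2 := (hTN' (x - y) (by linarith [hy.2])).1
      nlinarith [g0 y, g0 (x - y), f0 y, f0 (x - y)]
    calc M₂ ≤ ∫ y in T..(x - T), 4 * (f (x - y) * f y) :=
          intervalIntegral.integral_mono_on (by linarith)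
            (aux_intInt gm g0 g1 x T (x - T))
            ((aux_intInt fm f0 f1 x T (x - T)).const_mul 4) hpt
      _ = 4 * M₁ := by rw [intervalIntegral.integral_const_mul]
  have hfg : f x ≤ 2 * g x := (hTN' x hTx).2
  have hM2g : M₂ / g x ≤ ε/4 := by
    have h1 : M₂ / g x ≤ (4 * M₁) / g x := by gcongr
    have h2 : (4 * M₁) / g x ≤ (8 * M₁) / f x := by
      rw [div_le_div_iff₀ hgx hfx]; nlinarith
    have h3 : (8 * M₁) / f x = 8 * (M₁ / f x) := by rw [mul_div_assoc]
    have h4 : M₂ / g x ≤ 8 * (M₁ / f x) := by rw [← h3]; linarith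
    linarith
  have hM2g0 : 0 ≤ M₂ / g x := div_nonneg hM2nn hgx.le
  -- assemble
  have hsplit : (∫ y in Ioc (0:ℝ) x, g (x - y) * g y) / g x = 2 * (A₂ / g x) + M₂ / g x := by
    rw [hdg]; field_simp
  rw [hsplit, Real.dist_eq]
  obtain ⟨hx2a, hx2b⟩ := abs_lt.mp hx2
  rw [abs_lt]
  constructor <;> linarith

end AuxHelpers

/-- Strong subexponentiality is a tail property: if `F₁ ∈ 𝒮*` and `F₂` is a tail-equivalent
long-tailed distribution with finite mean, then `F₂ ∈ 𝒮*`. -/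
theorem strongSubexponential_of_tail_equiv
    (F₁ F₂ : ℝ → ℝ)
    (hF₁_mono : Monotone F₁) (hF₁_range : ∀ u, F₁ u ∈ Icc (0 : ℝ) 1)
    (hF₂_mono : Monotone F₂) (hF₂_range : ∀ u, F₂ u ∈ Icc (0 : ℝ) 1)
    (hF₁ : StrongSubexponential F₁)
    (hF₂_pos : ∀ x : ℝ, 0 < 1 - F₂ x)
    (hF₂_int : IntegrableOn (fun y => 1 - F₂ y) (Ioi (0 : ℝ)))
    (hequiv : Tendsto (fun x => (1 - F₂ x) / (1 - F₁ x)) atTop (nhds 1))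
    (hL₁ : LongTailed F₁) (hL₂ : LongTailed F₂) :
    StrongSubexponential F₂ := by
  obtain ⟨hf_pos, hf_int, hf_lim⟩ := hF₁
  refine ⟨hF₂_pos, hF₂_int, ?_⟩
  exact aux_main (fun y => 1 - F₁ y) (fun y => 1 - F₂ y)
    (measurable_const.sub hF₁_mono.measurable)
    (measurable_const.sub hF₂_mono.measurable)
    (fun u v huv => sub_le_sub_left (hF₁_mono huv) 1)
    (fun u v huv => sub_le_sub_left (hF₂_mono huv) 1)
    hf_pos hF₂_pos
    (fun y => by show (1:ℝ) - F₁ y ≤ 1; linarith [(hF₁_range y).1])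
    (fun y => by show (1:ℝ) - F₂ y ≤ 1; linarith [(hF₂_range y).1])
    hf_int hF₂_int hf_lim hequiv hL₁.2 hL₂.2
end
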